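/- arXiv:1012.4856 — 2 statements merged into one kernel-verified Lean document; each statement's English description precedes it below -/
import Mathlib

section
/- Let G be a connected simple graph on n ≥ 3 vertices with Randić index R, algebraic connectivity a, and diameter D. If D ≤ 2(n - 3 + 2√2)/π², then R/a ≤ ((n - 3 + 2√2)/2) / (2(1 - cos(π/n))). -/
/-!
The Randić index is at most `n / 2`: by AM–GM, `1 / √(d u d v) ≤ (1 / d u + 1 / d v) / 2`, and
summed over the edges every vertex `v` receives the weight `d v · 1 / (2 d v) = 1 / 2`.

For `x ⟂ 𝟙` with maximum `x u` and minimum `x w`, the Bhatia–Davis inequality gives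
`‖x‖² ≤ n (x u - x w)² / 4`, while Cauchy–Schwarz along a shortest `u`–`w` path gives
`(x u - x w)² ≤ D · xᵀ L x`. Hence `a ≥ 4 / (n D)` and `R / a ≤ n² D / 8`. Finally
`1 - cos (π / n) ≤ π² / (2 n²)`, so the diameter hypothesis bounds `n² D / 8` by the right-hand side.
-/

open Finset Real Matrix

/-- The Randić index of a finite simple graph:
`R(G) = ∑_{uv ∈ E(G)} 1/√(d(u)·d(v))`. -/
noncomputable def randicIndex {V : Type*} [Fintype V] (G : SimpleGraph V) : ℝ :=
  letI : DecidableRel G.Adj := Classical.decRel _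
  ∑ e ∈ G.edgeFinset,
    Sym2.lift ⟨fun u v => 1 / Real.sqrt ((G.degree u : ℝ) * (G.degree v : ℝ)),
      fun u v => by simp [mul_comm]⟩ e

/-- The algebraic connectivity of a graph on `Fin n`: the second smallest eigenvalue
of the Laplacian matrix, characterized (via Courant–Fischer, since the all-ones vector
is an eigenvector of the smallest eigenvalue `0`) as the infimum of the Rayleigh
quotient over nonzero vectors orthogonal to the all-ones vector. -/
noncomputable def algebraicConnectivity {n : ℕ} (G : SimpleGraph (Fin n)) : ℝ :=
  letI : DecidableRel G.Adj := Classical.decRel _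
  sInf {r : ℝ | ∃ x : Fin n → ℝ, x ≠ 0 ∧ (∑ i, x i) = 0 ∧
    r = (x ⬝ᵥ ((G.lapMatrix ℝ).mulVec x)) / (x ⬝ᵥ x)}

/-- The edge connectivity of a graph: the least number of edges whose deletion
disconnects the graph. -/
noncomputable def edgeConnectivity {V : Type*} [Fintype V] (G : SimpleGraph V) : ℕ :=
  sInf {k : ℕ | ∃ s : Set (Sym2 V), s ⊆ G.edgeSet ∧ s.ncard = k ∧
    ¬ (G.deleteEdges s).Connected}

/-- The star `K_{1,n-1}` on vertex set `Fin n`: vertex `0` is adjacent to all others. -/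
def starGraph (n : ℕ) : SimpleGraph (Fin n) where
  Adj i j := i ≠ j ∧ ((i : ℕ) = 0 ∨ (j : ℕ) = 0)
  symm := ⟨fun i j h => ⟨h.1.symm, h.2.symm⟩⟩
  loopless := ⟨fun i h => h.1 rfl⟩


theorem one_div_sqrt_mul_le {a b : ℝ} (ha : 0 ≤ a) (hb : 0 ≤ b) :
    1 / √(a * b) ≤ (a⁻¹ + b⁻¹) / 2 := by
  have h := two_mul_le_add_sq √a⁻¹ √b⁻¹
  rw [sq_sqrt (inv_nonneg.2 ha), sq_sqrt (inv_nonneg.2 hb), mul_assoc, ← sqrt_mul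
    (inv_nonneg.2 ha), ← mul_inv, sqrt_inv] at h
  rw [one_div]
  linarith

theorem List.sq_sum_le_length_mul_sum_sq {R : Type*} [Semiring R] [LinearOrder R]
    [IsStrictOrderedRing R] [ExistsAddOfLE R] (l : List R) :
    l.sum ^ 2 ≤ l.length * (l.map (· ^ 2)).sum := by
  obtain ⟨n, f, rfl⟩ : ∃ n f, l = List.ofFn (n := n) f := ⟨_, _, List.ofFn_getElem.symm⟩
  simpa [List.sum_ofFn] using sq_sum_le_card_mul_sum_sq (s := univ) (f := f)

theorem dotProduct_self_le_of_sum_eq_zero {ι : Type*} [Fintype ι] {x : ι → ℝ}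
    (hx : ∑ i, x i = 0) {a b : ℝ} (hb : ∀ i, b ≤ x i) (ha : ∀ i, x i ≤ a) :
    x ⬝ᵥ x ≤ Fintype.card ι * (a - b) ^ 2 / 4 := by
  have hcard : (0 : ℝ) ≤ Fintype.card ι := Nat.cast_nonneg _
  calc x ⬝ᵥ x = ∑ i, x i * x i := rfl
    _ ≤ ∑ i, ((a + b) * x i - a * b) := sum_le_sum fun i _ => by nlinarith [ha i, hb i]
    _ = -(Fintype.card ι * (a * b)) := by simp [sum_sub_distrib, ← mul_sum, hx]
    _ ≤ Fintype.card ι * (a - b) ^ 2 / 4 := by nlinarith [mul_nonneg hcard (sq_nonneg (a + b))]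

theorem one_sub_cos_pi_div_le (n : ℕ) : 1 - cos (π / n) ≤ π ^ 2 / (2 * n ^ 2) := by
  have h := one_sub_sq_div_two_le_cos (x := π / n)
  rw [div_pow, div_div, mul_comm] at h
  linarith

theorem one_sub_cos_pi_div_pos {n : ℕ} (hn : 1 ≤ n) : 0 < 1 - cos (π / n) := by
  have h := cos_lt_cos_of_nonneg_of_le_pi le_rfl
    (div_le_self pi_pos.le (by exact_mod_cast hn : (1 : ℝ) ≤ n)) (by positivity)
  rw [cos_zero] at h
  linarith

def sqDiff {V : Type*} (x : V → ℝ) : Sym2 V → ℝ :=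
  Sym2.lift ⟨fun i j => (x i - x j) ^ 2, fun i j => sub_sq_comm (x i) (x j)⟩

theorem sqDiff_nonneg {V : Type*} (x : V → ℝ) (e : Sym2 V) : 0 ≤ sqDiff x e := by
  induction e with
  | _ i j => exact sq_nonneg _

namespace SimpleGraph

variable {V : Type*} {G : SimpleGraph V} {u w : V}

theorem Walk.sum_darts_sub {M : Type*} [AddCommGroup M] (x : V → M) (p : G.Walk u w) :
    (p.darts.map fun d => x d.fst - x d.snd).sum = x u - x w := by
  induction p with
  | nil => simp
  | cons _ p ih => simp [ih]

theorem Walk.sq_sub_le_length_mul_sum_edges (x : V → ℝ) (p : G.Walk u w) :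
    (x u - x w) ^ 2 ≤ p.length * (p.edges.map (sqDiff x)).sum := by
  have h := List.sq_sum_le_length_mul_sum_sq (p.darts.map fun d => x d.fst - x d.snd)
  rw [p.sum_darts_sub, List.length_map, length_darts, List.map_map] at h
  rw [edges, List.map_map]
  exact h

theorem Walk.IsTrail.sum_edges_le_sum_edgeFinset [Fintype V] [DecidableRel G.Adj]
    {M : Type*} [AddCommMonoid M] [PartialOrder M] [IsOrderedAddMonoid M] {p : G.Walk u w}
    (hp : p.IsTrail) {f : Sym2 V → M} (hf : ∀ e, 0 ≤ f e) :
    (p.edges.map f).sum ≤ ∑ e ∈ G.edgeFinset, f e := by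
  classical
  rw [← List.sum_toFinset f hp.edges_nodup]
  exact sum_le_sum_of_subset_of_nonneg
    (fun e he => mem_edgeFinset.2 (p.edges_subset_edgeSet (List.mem_toFinset.1 he)))
    fun e _ _ => hf e

theorem Connected.diam_pos [Finite V] [Nontrivial V] (hG : G.Connected) : 0 < G.diam :=
  Nat.pos_of_ne_zero (connected_iff_diam_ne_zero.1 hG)

section Darts

variable [Fintype V] (G) [DecidableRel G.Adj] {M : Type*} [AddCommMonoid M]

theorem sum_darts_edge (h : Sym2 V → M) :
    ∑ d : G.Dart, h d.edge = 2 • ∑ e ∈ G.edgeFinset, h e := by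
  classical
  rw [← sum_fiberwise_of_maps_to (g := Dart.edge) (fun d _ => mem_edgeFinset.2 d.edge_mem),
    smul_sum]
  refine sum_congr rfl fun e he => ?_
  rw [sum_congr rfl fun d hd => congrArg h (mem_filter.1 hd).2, sum_const,
    G.dart_edge_fiber_card e (mem_edgeFinset.1 he)]

theorem sum_darts_fst (g : V → M) : ∑ d : G.Dart, g d.fst = ∑ v, G.degree v • g v := by
  classical
  rw [← sum_fiberwise_of_maps_to (g := fun d : G.Dart => d.fst) (fun d _ => mem_univ d.fst)]
  refine sum_congr rfl fun v _ => ?_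
  rw [sum_congr rfl fun d hd => congrArg g (mem_filter.1 hd).2, sum_const]
  congr 1
  convert G.dart_fst_fiber_card_eq_degree v

theorem sum_darts_snd (g : V → M) : ∑ d : G.Dart, g d.snd = ∑ d : G.Dart, g d.fst :=
  Fintype.sum_equiv Dart.symm_involutive.toPerm _ _ fun _ => rfl

theorem sum_darts_eq_sum_sum_adj (f : V → V → M) :
    ∑ d : G.Dart, f d.fst d.snd = ∑ i, ∑ j, if G.Adj i j then f i j else 0 := by
  rw [← sum_product', ← sum_filter]
  exact sum_bij' (fun d _ => d.toProd) (fun p hp => ⟨p, (mem_filter.1 hp).2⟩)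
    (fun d _ => by simp [d.adj]) (fun _ _ => mem_univ _) (fun _ _ => rfl) (fun _ _ => rfl)
    (fun _ _ => rfl)

end Darts

variable [Fintype V] [DecidableEq V] [DecidableRel G.Adj]

theorem dotProduct_lapMatrix_mulVec (x : V → ℝ) :
    x ⬝ᵥ (G.lapMatrix ℝ *ᵥ x) = ∑ e ∈ G.edgeFinset, sqDiff x e := by
  rw [← toLinearMap₂'_apply', lapMatrix_toLinearMap₂', ← sum_darts_eq_sum_sum_adj]
  change (∑ d : G.Dart, sqDiff x d.edge) / 2 = _
  rw [sum_darts_edge, nsmul_eq_mul]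
  push_cast
  ring

theorem Connected.sq_sub_le_diam_mul (hG : G.Connected) (x : V → ℝ) (u w : V) :
    (x u - x w) ^ 2 ≤ G.diam * (x ⬝ᵥ (G.lapMatrix ℝ *ᵥ x)) := by
  have := hG.nonempty
  obtain ⟨p, hp, hlen⟩ := hG.exists_path_of_dist u w
  have hdiam : (p.length : ℝ) ≤ G.diam := by
    exact_mod_cast hlen ▸ dist_le_diam (connected_iff_ediam_ne_top.1 hG)
  calc (x u - x w) ^ 2 ≤ p.length * (p.edges.map (sqDiff x)).sum :=
        p.sq_sub_le_length_mul_sum_edges x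
    _ ≤ G.diam * ∑ e ∈ G.edgeFinset, sqDiff x e := by
        gcongr
        · exact List.sum_nonneg fun _ he => by
            obtain ⟨e, -, rfl⟩ := List.mem_map.1 he
            exact sqDiff_nonneg x e
        · exact hp.isTrail.sum_edges_le_sum_edgeFinset (sqDiff_nonneg x)
    _ = G.diam * (x ⬝ᵥ (G.lapMatrix ℝ *ᵥ x)) := by rw [dotProduct_lapMatrix_mulVec]

end SimpleGraph

section Randic

variable {V : Type*} [Fintype V] (G : SimpleGraph V) [DecidableRel G.Adj]

theorem two_mul_randicIndex :
    2 * randicIndex G = ∑ d : G.Dart, 1 / √((G.degree d.fst : ℝ) * G.degree d.snd) := by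
  rw [two_mul, ← two_nsmul, randicIndex]
  convert (G.sum_darts_edge _).symm
  simp only [SimpleGraph.Dart.edge, Sym2.lift_mk]
  congr!

theorem randicIndex_le_card_div_two (hdeg : ∀ v, 0 < G.degree v) :
    randicIndex G ≤ Fintype.card V / 2 := by
  have hamgm : ∑ d : G.Dart, 1 / √((G.degree d.fst : ℝ) * G.degree d.snd) ≤
      ∑ d : G.Dart, ((G.degree d.fst : ℝ)⁻¹ + (G.degree d.snd : ℝ)⁻¹) / 2 :=
    sum_le_sum fun d _ => one_div_sqrt_mul_le (Nat.cast_nonneg _) (Nat.cast_nonneg _)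
  have hsum : ∑ d : G.Dart, ((G.degree d.fst : ℝ)⁻¹ + (G.degree d.snd : ℝ)⁻¹) / 2 =
      Fintype.card V := by
    rw [← sum_div, sum_add_distrib, G.sum_darts_snd fun v => (G.degree v : ℝ)⁻¹,
      G.sum_darts_fst fun v => (G.degree v : ℝ)⁻¹]
    simp [nsmul_eq_mul, (hdeg _).ne']
  linarith [two_mul_randicIndex G]

end Randic

theorem four_div_card_mul_diam_le_algebraicConnectivity {n : ℕ} [Nontrivial (Fin n)]
    (G : SimpleGraph (Fin n)) (hG : G.Connected) :
    4 / (n * G.diam) ≤ algebraicConnectivity G := by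
  classical
  have hdiam : (0 : ℝ) < G.diam := Nat.cast_pos.2 hG.diam_pos
  have hn : (0 : ℝ) < n := by simpa using Fintype.card_pos (α := Fin n)
  apply le_csInf
  · obtain ⟨a, b, hab⟩ := exists_pair_ne (Fin n)
    refine ⟨_, Pi.single a 1 - Pi.single b 1, fun h => ?_, ?_, rfl⟩
    · simpa [hab.symm] using congrFun h a
    · simp [sum_sub_distrib]
  rintro r ⟨x, hx, hsum, rfl⟩
  obtain ⟨u, -, hu⟩ := exists_max_image univ x univ_nonempty
  obtain ⟨w, -, hw⟩ := exists_min_image univ x univ_nonempty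
  have hvar := dotProduct_self_le_of_sum_eq_zero hsum (fun i => hw i (mem_univ i))
    fun i => hu i (mem_univ i)
  rw [Fintype.card_fin] at hvar
  have hxx : 0 < x ⬝ᵥ x :=
    lt_of_le_of_ne (sum_nonneg fun i _ => mul_self_nonneg (x i))
      (Ne.symm (dotProduct_self_eq_zero.not.2 hx))
  rw [le_div_iff₀ hxx, div_mul_eq_mul_div, div_le_iff₀ (by positivity)]
  calc 4 * (x ⬝ᵥ x) ≤ n * (x u - x w) ^ 2 := by linarith
    _ ≤ n * (G.diam * (x ⬝ᵥ (G.lapMatrix ℝ *ᵥ x))) := by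
        gcongr
        exact hG.sq_sub_le_diam_mul x u w
    _ = _ := by ring

theorem randic_over_algConn_le_of_diam_small
    {n : ℕ} (hn : 3 ≤ n) (G : SimpleGraph (Fin n)) (hG : G.Connected)
    (hD : (G.diam : ℝ) ≤ 2 * ((n : ℝ) - 3 + 2 * Real.sqrt 2) / Real.pi ^ 2) :
    randicIndex G / algebraicConnectivity G ≤
      (((n : ℝ) - 3 + 2 * Real.sqrt 2) / 2) / (2 * (1 - Real.cos (Real.pi / n))) := by
  classical
  have : Nontrivial (Fin n) := Fin.nontrivial_iff_two_le.2 (by omega)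
  have hR : randicIndex G ≤ n / 2 := by
    simpa using randicIndex_le_card_div_two G fun v => hG.preconnected.degree_pos_of_nontrivial v
  have ha := four_div_card_mul_diam_le_algebraicConnectivity G hG
  have hdiam : (0 : ℝ) < G.diam := Nat.cast_pos.2 hG.diam_pos
  have hcos := one_sub_cos_pi_div_le n
  have hcos0 := one_sub_cos_pi_div_pos (n := n) (by omega)
  rw [le_div_iff₀ (by positivity)] at hD
  calc randicIndex G / algebraicConnectivity G ≤ (n / 2) / (4 / (n * G.diam)) :=
        div_le_div₀ (by positivity) hR (by positivity) ha
    _ = n ^ 2 * G.diam / 8 := by field_simp; ring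
    _ ≤ _ := by
        rw [le_div_iff₀ (by positivity), div_mul_eq_mul_div, div_le_iff₀ (by positivity)]
        rw [le_div_iff₀ (by positivity)] at hcos
        nlinarith [mul_le_mul_of_nonneg_left hcos (by positivity : (0 : ℝ) ≤ n ^ 2 * G.diam)]
end

section
/- Let G be a connected simple graph on n vertices with algebraic connectivity a and edge connectivity κ'. Then a ≥ 2κ'(1 - cos(π/n)). -/
open Finset Real Matrix

/-!
Sort the entries of a vector `x ⊥ 𝟙` increasingly, `x (σ 0) ≤ ⋯ ≤ x (σ (n-1))`, and let
`d t = x (σ (t+1)) - x (σ t) ≥ 0` be the gaps. An edge whose endpoints sit at sorted positions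
`p < q` contributes `(d p + ⋯ + d (q-1))² ≥ d p ² + ⋯ + d (q-1) ²` to the Laplacian energy, and
every gap `t` is spanned by all edges of the cut `{σ 0, …, σ t}`, so by at least `κ'` edges.
Hence `xᵀ L x ≥ κ' ∑ₜ (d t)²`, which is `κ'` times the energy of the sorted vector on the path
`P_n`. Expanding in the cosine eigenbasis of the path Laplacian bounds that energy below by
`a(P_n) ‖x‖² = 2 (1 - cos (π / n)) ‖x‖²`.
-/

/- The Laplacian of the path `0 — 1 — ⋯ — (n-1)` has the eigenvectors
`i ↦ cos ((2i+1) kπ / 2n)` with eigenvalues `2 (1 - cos (kπ / n))`, `k < n`. -/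

noncomputable def pathEigenvector (n k i : ℕ) : ℝ := cos ((2 * i + 1) * (k * π / (2 * n)))

noncomputable def pathEigenvalue (n k : ℕ) : ℝ := 2 * (1 - cos (k * π / n))

def pathLaplacian (n : ℕ) (v : ℕ → ℝ) (j : ℕ) : ℝ :=
  (if 0 < j then v j - v (j - 1) else 0) + (if j + 1 < n then v j - v (j + 1) else 0)

def pathForm (n : ℕ) (v y : ℕ → ℝ) : ℝ :=
  ∑ i ∈ range (n - 1), (v (i + 1) - v i) * (y (i + 1) - y i)

lemma pathForm_comm (n : ℕ) (v y : ℕ → ℝ) : pathForm n v y = pathForm n y v := by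
  simp only [pathForm, mul_comm]

lemma pathForm_eq_sum_pathLaplacian_mul (n : ℕ) (v y : ℕ → ℝ) :
    pathForm n v y = ∑ j ∈ range n, pathLaplacian n v j * y j := by
  rcases n.eq_zero_or_pos with rfl | hn
  · simp [pathForm]
  obtain ⟨m, rfl⟩ : ∃ m, n = m + 1 := ⟨n - 1, by omega⟩
  have hdown : ∑ j ∈ range (m + 1), (if 0 < j then v j - v (j - 1) else 0) * y j
      = ∑ i ∈ range m, (v (i + 1) - v i) * y (i + 1) := by
    simp [sum_range_succ']
  have hup : ∑ j ∈ range (m + 1), (if j + 1 < m + 1 then v j - v (j + 1) else 0) * y j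
      = ∑ i ∈ range m, (v i - v (i + 1)) * y i := by
    rw [sum_range_succ, if_neg (lt_irrefl _), zero_mul, add_zero]
    exact sum_congr rfl fun i hi => by rw [if_pos (by simpa using hi)]
  simp only [pathLaplacian, add_mul]
  rw [sum_add_distrib, hdown, hup, pathForm, Nat.add_sub_cancel, ← sum_add_distrib]
  exact sum_congr rfl fun i _ => by ring

lemma two_mul_cos_sub_cos_sub_cos_add (a b : ℝ) :
    2 * cos a - cos (a - 2 * b) - cos (a + 2 * b) = 2 * (1 - cos (2 * b)) * cos a := by
  rw [cos_sub, cos_add]; ring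

lemma pathLaplacian_pathEigenvector (n k : ℕ) {j : ℕ} (hj : j < n) :
    pathLaplacian n (pathEigenvector n k) j = pathEigenvalue n k * pathEigenvector n k j := by
  set b : ℝ := k * π / (2 * n) with hb
  have hv (i : ℕ) : pathEigenvector n k i = cos ((2 * i + 1) * b) := rfl
  have hn : (n : ℝ) ≠ 0 := Nat.cast_ne_zero.2 (by omega)
  have h2b : 2 * b = k * π / n := by rw [hb]; field_simp
  -- Reflecting the vector at both ends (`v (-1) = v 0`, `v n = v (n - 1)`) turns the two
  -- boundary rows of the Laplacian into interior rows.
  have hprev : (if 0 < j then pathEigenvector n k j - pathEigenvector n k (j - 1) else 0)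
      = cos ((2 * j + 1) * b) - cos ((2 * j + 1) * b - 2 * b) := by
    split_ifs with h
    · rw [hv, hv, Nat.cast_sub h]; ring_nf
    · obtain rfl : j = 0 := by omega
      rw [← cos_neg (_ - _)]; ring_nf
  have hnext : (if j + 1 < n then pathEigenvector n k j - pathEigenvector n k (j + 1) else 0)
      = cos ((2 * j + 1) * b) - cos ((2 * j + 1) * b + 2 * b) := by
    split_ifs with h
    · rw [hv, hv]; push_cast; ring_nf
    · obtain rfl : j = n - 1 := by omega
      have ha : (2 * ((n - 1 : ℕ) : ℝ) + 1) * b = k * π - b := by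
        rw [Nat.cast_pred (by omega), hb]; field_simp; ring
      rw [ha, show k * π - b + 2 * b = b + k * π by ring, cos_nat_mul_pi_sub, cos_add_nat_mul_pi,
        sub_self]
  rw [pathLaplacian, hprev, hnext, pathEigenvalue, ← h2b, hv]
  linarith [two_mul_cos_sub_cos_sub_cos_add ((2 * j + 1) * b) b]

lemma pathForm_pathEigenvector (n k : ℕ) (y : ℕ → ℝ) :
    pathForm n (pathEigenvector n k) y
      = pathEigenvalue n k * ∑ j ∈ range n, pathEigenvector n k j * y j := by
  rw [pathForm_eq_sum_pathLaplacian_mul, mul_sum]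
  exact sum_congr rfl fun j hj => by
    rw [pathLaplacian_pathEigenvector n k (mem_range.1 hj), mul_assoc]

lemma pathEigenvalue_strictMonoOn (n : ℕ) : StrictMonoOn (pathEigenvalue n) (Set.Iic n) := by
  intro k hk l hl hkl
  have hmem (m : ℕ) (hm : m ∈ Set.Iic n) : (m : ℝ) * π / n ∈ Set.Icc 0 π := by
    refine ⟨by positivity, ?_⟩
    rw [mul_div_right_comm]
    exact mul_le_of_le_one_left pi_pos.le
      (div_le_one_of_le₀ (by exact_mod_cast hm) (Nat.cast_nonneg n))
  have hn : (0 : ℝ) < n := by exact_mod_cast (Nat.zero_le k).trans_lt (hkl.trans_le hl)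
  have hlt : (k : ℝ) * π / n < l * π / n := by gcongr
  simp only [pathEigenvalue]
  linarith [strictAntiOn_cos (hmem k hk) (hmem l hl) hlt]

lemma sum_pathEigenvector_mul_eq_zero {n k l : ℕ} (hk : k < n) (hl : l < n) (hkl : k ≠ l) :
    ∑ j ∈ range n, pathEigenvector n k j * pathEigenvector n l j = 0 := by
  have hne : pathEigenvalue n k ≠ pathEigenvalue n l :=
    (pathEigenvalue_strictMonoOn n).injOn.ne (Set.mem_Iic.2 hk.le) (Set.mem_Iic.2 hl.le) hkl
  have h := pathForm_comm n (pathEigenvector n k) (pathEigenvector n l)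
  simp only [pathForm_pathEigenvector, mul_comm (pathEigenvector n l _)] at h
  exact (mul_eq_zero.1 (by linarith : (pathEigenvalue n k - pathEigenvalue n l) *
    ∑ j ∈ range n, pathEigenvector n k j * pathEigenvector n l j = 0)).resolve_left
    (sub_ne_zero.2 hne)

lemma sum_pathEigenvector_sq_pos {n k : ℕ} (hk : k < n) :
    0 < ∑ j ∈ range n, pathEigenvector n k j ^ 2 := by
  have hn : (0 : ℝ) < n := by exact_mod_cast (Nat.zero_le k).trans_lt hk
  have hkn : (k : ℝ) / n < 1 := (div_lt_one hn).2 (by exact_mod_cast hk)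
  have h0 : 0 < pathEigenvector n k 0 := by
    have hb : (2 * ((0 : ℕ) : ℝ) + 1) * (k * π / (2 * n)) = k / n * (π / 2) := by ring
    rw [pathEigenvector, hb]
    exact cos_pos_of_mem_Ioo ⟨by linarith [pi_pos, show 0 ≤ k / n * (π / 2) by positivity],
      mul_lt_of_lt_one_left (by positivity) hkn⟩
  exact (pow_pos h0 2).trans_le
    (single_le_sum (fun j _ => sq_nonneg (pathEigenvector n k j)) (mem_range.2 (by omega)))

lemma linearIndependent_pathEigenvector (n : ℕ) :
    LinearIndependent ℝ fun k j : Fin n => pathEigenvector n k j := by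
  rw [Fintype.linearIndependent_iff]
  intro g hg l
  have hdot (k : Fin n) : ∑ j : Fin n, g k * pathEigenvector n k j * pathEigenvector n l j
      = g k * ∑ j ∈ range n, pathEigenvector n k j * pathEigenvector n l j := by
    rw [← Fin.sum_univ_eq_sum_range, mul_sum]
    simp only [mul_assoc]
  have h : ∑ j : Fin n, (∑ k, g k • fun j : Fin n => pathEigenvector n k j) j
      * pathEigenvector n l j = 0 := by rw [hg]; simp
  simp only [Finset.sum_apply, Pi.smul_apply, smul_eq_mul, sum_mul] at h
  rw [sum_comm, sum_eq_single l (fun k _ hkl => by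
    rw [hdot, sum_pathEigenvector_mul_eq_zero k.2 l.2 (Fin.val_ne_of_ne hkl), mul_zero])
    (by simp), hdot] at h
  simp only [← sq] at h
  exact (mul_eq_zero.1 h).resolve_right (sum_pathEigenvector_sq_pos l.2).ne'

lemma exists_eq_sum_pathEigenvector (n : ℕ) (y : ℕ → ℝ) :
    ∃ c : ℕ → ℝ, ∀ j < n, y j = ∑ k ∈ range n, c k * pathEigenvector n k j := by
  have hspan := (linearIndependent_pathEigenvector n).span_eq_top_of_card_eq_finrank' (by simp)
  obtain ⟨c, hc⟩ := (Submodule.mem_span_range_iff_exists_fun ℝ).1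
    (hspan.ge (Submodule.mem_top (x := fun j : Fin n => y j)))
  refine ⟨fun k => if h : k < n then c ⟨k, h⟩ else 0, fun j hj => ?_⟩
  have := congrFun hc ⟨j, hj⟩
  simp only [Finset.sum_apply, Pi.smul_apply, smul_eq_mul] at this
  rw [← this, ← Fin.sum_univ_eq_sum_range]
  simp

section Expansion

variable {ι : Type*} {n : ℕ} {s : Finset ι} {c : ι → ℝ} {v : ι → ℕ → ℝ} {y : ℕ → ℝ}

lemma sum_range_mul_of_eq_sum (hy : ∀ j < n, y j = ∑ k ∈ s, c k * v k j) (z : ℕ → ℝ) :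
    ∑ j ∈ range n, y j * z j = ∑ k ∈ s, c k * ∑ j ∈ range n, v k j * z j := by
  rw [sum_congr rfl fun j hj => by rw [hy j (mem_range.1 hj), sum_mul], sum_comm]
  simp only [mul_sum, mul_assoc]

lemma pathForm_of_eq_sum (hy : ∀ j < n, y j = ∑ k ∈ s, c k * v k j) (z : ℕ → ℝ) :
    pathForm n y z = ∑ k ∈ s, c k * pathForm n (v k) z := by
  have hdiff : ∀ i ∈ range (n - 1), y (i + 1) - y i = ∑ k ∈ s, c k * (v k (i + 1) - v k i) :=
    fun i hi => by
      rw [hy i (by simp at hi; omega), hy (i + 1) (by simp at hi; omega), ← sum_sub_distrib]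
      simp only [mul_sub]
  rw [pathForm, sum_congr rfl fun i hi => by rw [hdiff i hi, sum_mul], sum_comm]
  simp only [pathForm, mul_sum, mul_assoc]

end Expansion

lemma pathEigenvector_zero (n j : ℕ) : pathEigenvector n 0 j = 1 := by
  simp [pathEigenvector]

theorem pathEigenvalue_one_mul_sum_sq_le_pathForm (n : ℕ) (y : ℕ → ℝ)
    (hy : ∑ j ∈ range n, y j = 0) :
    pathEigenvalue n 1 * ∑ j ∈ range n, y j ^ 2 ≤ pathForm n y y := by
  obtain ⟨c, hc⟩ := exists_eq_sum_pathEigenvector n y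
  set D : ℕ → ℝ := fun k => ∑ j ∈ range n, pathEigenvector n k j ^ 2
  have hcoef : ∀ l < n, ∑ j ∈ range n, pathEigenvector n l j * y j = c l * D l := by
    intro l hl
    simp only [mul_comm (pathEigenvector n l _), sum_range_mul_of_eq_sum hc]
    rw [sum_eq_single_of_mem l (mem_range.2 hl) fun k hk hkl => by
      rw [sum_pathEigenvector_mul_eq_zero (mem_range.1 hk) hl hkl, mul_zero]]
    simp only [D, sq]
  have hnorm : ∑ j ∈ range n, y j ^ 2 = ∑ k ∈ range n, c k ^ 2 * D k := by
    simp only [sq, sum_range_mul_of_eq_sum hc y]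
    exact sum_congr rfl fun k hk => by rw [hcoef k (mem_range.1 hk), mul_assoc]
  have henergy : pathForm n y y = ∑ k ∈ range n, pathEigenvalue n k * (c k ^ 2 * D k) := by
    rw [pathForm_of_eq_sum hc]
    refine sum_congr rfl fun k hk => ?_
    rw [pathForm_pathEigenvector, hcoef k (mem_range.1 hk)]
    ring
  rw [hnorm, henergy, mul_sum]
  refine sum_le_sum fun k hk => ?_
  rcases k.eq_zero_or_pos with rfl | hk0
  · have hc0 : c 0 * D 0 = 0 := by
      rw [← hcoef 0 (mem_range.1 hk), ← hy]
      simp only [pathEigenvector_zero, one_mul]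
    simp [sq, mul_assoc, hc0]
  · have hle : pathEigenvalue n 1 ≤ pathEigenvalue n k :=
      (pathEigenvalue_strictMonoOn n).monotoneOn (Set.mem_Iic.2 (by simp at hk; omega))
        (Set.mem_Iic.2 (by simp at hk; omega)) hk0
    exact mul_le_mul_of_nonneg_right hle (by positivity)

lemma edgeConnectivity_eq_zero_of_subsingleton {V : Type*} [Fintype V] [Subsingleton V]
    (G : SimpleGraph V) : edgeConnectivity G = 0 := by
  rcases isEmpty_or_nonempty V with hV | hV
  · exact Nat.sInf_eq_zero.2 <| .inl
      ⟨∅, Set.empty_subset _, Set.ncard_empty _, fun h => isEmptyElim h.nonempty.some⟩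
  · exact Nat.sInf_eq_zero.2 <| .inr <|
      Set.eq_empty_of_forall_notMem fun _ ⟨_, _, _, h⟩ => h .of_subsingleton

lemma edgeConnectivity_le_card_cut {V : Type*} [Fintype V] [DecidableEq V] (G : SimpleGraph V)
    [DecidableRel G.Adj] (S : Finset V) {a b : V} (ha : a ∈ S) (hb : b ∉ S) :
    edgeConnectivity G ≤ #{p : V × V | G.Adj p.1 p.2 ∧ p.1 ∈ S ∧ p.2 ∉ S} := by
  set A : Finset (V × V) := {p : V × V | G.Adj p.1 p.2 ∧ p.1 ∈ S ∧ p.2 ∉ S}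
  have hinj : Set.InjOn (fun p : V × V => s(p.1, p.2)) A := by
    intro p hp q hq hpq
    simp only [A, coe_filter, mem_univ, true_and] at hp hq
    rcases Sym2.eq_iff.1 hpq with ⟨h1, h2⟩ | ⟨h1, -⟩
    · exact Prod.ext h1 h2
    · exact absurd (h1 ▸ hp.2.1) hq.2.2
  have hdisc : ¬ (G.deleteEdges (A.image fun p => s(p.1, p.2) : Set (Sym2 V))).Connected := by
    intro h
    obtain ⟨w⟩ := h.preconnected a b
    obtain ⟨d, -, hd₁, hd₂⟩ := w.exists_boundary_dart S ha hb
    have hadj := d.adj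
    rw [SimpleGraph.deleteEdges_adj] at hadj
    exact hadj.2 (mem_image_of_mem _ (by simpa [A] using ⟨hadj.1, hd₁, hd₂⟩))
  calc edgeConnectivity G ≤ #(A.image fun p => s(p.1, p.2)) := by
        refine Nat.sInf_le ⟨_, ?_, Set.ncard_coe_finset _, hdisc⟩
        intro e he
        obtain ⟨p, hp, rfl⟩ := mem_image.1 he
        exact (mem_filter.1 hp).2.1
    _ = #A := card_image_of_injOn hinj

lemma sum_Ico_sq_sub_le_sq_sub {y : ℕ → ℝ} (hy : Monotone y) {p q : ℕ} (hpq : p ≤ q) :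
    ∑ t ∈ Ico p q, (y (t + 1) - y t) ^ 2 ≤ (y q - y p) ^ 2 := by
  rw [← sum_Ico_sub y hpq]
  exact sum_sq_le_sq_sum_of_nonneg fun t _ => sub_nonneg.2 (hy t.le_succ)

lemma sum_Ico_sq_sub_add_sum_Ico_sq_sub_le {y : ℕ → ℝ} (hy : Monotone y) (p q : ℕ) :
    ∑ t ∈ Ico p q, (y (t + 1) - y t) ^ 2 + ∑ t ∈ Ico q p, (y (t + 1) - y t) ^ 2
      ≤ (y p - y q) ^ 2 := by
  rcases le_total p q with h | h
  · rw [Ico_eq_empty_of_le h, sum_empty, add_zero, ← neg_sub, neg_sq]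
    exact sum_Ico_sq_sub_le_sq_sub hy h
  · rw [Ico_eq_empty_of_le h, sum_empty, zero_add]
    exact sum_Ico_sq_sub_le_sq_sub hy h

lemma sum_adj_sum_Ico_eq_sum_card_mul {V : Type*} [Fintype V] (G : SimpleGraph V)
    [DecidableRel G.Adj] {n : ℕ} (pos : V → Fin n) (d : ℕ → ℝ) :
    ∑ u, ∑ v, (if G.Adj u v then ∑ t ∈ Ico (pos u : ℕ) (pos v), d t else 0)
      = ∑ t ∈ range (n - 1),
          #{p : V × V | G.Adj p.1 p.2 ∧ (pos p.1 : ℕ) ≤ t ∧ t < pos p.2} * d t := by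
  have hIco (u v : V) :
      Ico (pos u : ℕ) (pos v) = {t ∈ range (n - 1) | (pos u : ℕ) ≤ t ∧ t < pos v} := by
    ext t; simp only [mem_Ico, mem_filter, mem_range]; have := (pos v).2; omega
  have hite (u v : V) : (if G.Adj u v then ∑ t ∈ Ico (pos u : ℕ) (pos v), d t else 0)
      = ∑ t ∈ range (n - 1), if G.Adj u v ∧ (pos u : ℕ) ≤ t ∧ t < pos v then d t else 0 := by
    rw [hIco, sum_filter]
    split_ifs with h <;> simp [h]
  simp only [hite]
  rw [← Fintype.sum_prod_type', sum_comm]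
  refine sum_congr rfl fun t _ => ?_
  rw [natCast_card_filter, sum_mul]
  simp only [ite_mul, one_mul, zero_mul]

theorem two_mul_edgeConnectivity_mul_pathForm_le {V : Type*} [Fintype V] [DecidableEq V]
    (G : SimpleGraph V) [DecidableRel G.Adj] {n : ℕ} (pos : V ≃ Fin n) {y : ℕ → ℝ}
    (hy : Monotone y) :
    2 * edgeConnectivity G * pathForm n y y
      ≤ ∑ u, ∑ v, if G.Adj u v then (y (pos u) - y (pos v)) ^ 2 else 0 := by
  set d : ℕ → ℝ := fun t => (y (t + 1) - y t) ^ 2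
  calc 2 * edgeConnectivity G * pathForm n y y
      = 2 * ∑ t ∈ range (n - 1), (edgeConnectivity G : ℝ) * d t := by
        rw [pathForm, mul_assoc, mul_sum]; simp only [d, sq]
    _ ≤ 2 * ∑ t ∈ range (n - 1),
          #{p : V × V | G.Adj p.1 p.2 ∧ (pos p.1 : ℕ) ≤ t ∧ t < pos p.2} * d t := by
        gcongr with t ht
        have ht : t + 1 < n := by simp only [mem_range] at ht; omega
        simpa using edgeConnectivity_le_card_cut G {v | (pos v : ℕ) ≤ t}
          (a := pos.symm ⟨0, by omega⟩) (b := pos.symm ⟨t + 1, ht⟩) (by simp) (by simp)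
    _ = 2 * ∑ u, ∑ v, if G.Adj u v then ∑ t ∈ Ico (pos u : ℕ) (pos v), d t else 0 := by
        rw [sum_adj_sum_Ico_eq_sum_card_mul]
    _ = ∑ u, ∑ v, if G.Adj u v then
          ∑ t ∈ Ico (pos u : ℕ) (pos v), d t + ∑ t ∈ Ico (pos v : ℕ) (pos u), d t else 0 := by
        simp only [ite_add_zero, sum_add_distrib]
        rw [two_mul]; congr 1
        rw [sum_comm]; simp only [G.adj_comm]
    _ ≤ _ := by
        gcongr with u _ v _
        split_ifs
        · exact sum_Ico_sq_sub_add_sum_Ico_sq_sub_le hy _ _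
        · rfl

lemma exists_eq_monotone_comp_equiv {V : Type*} [Fintype V] (x : V → ℝ) :
    ∃ (pos : V ≃ Fin (Fintype.card V)) (y : ℕ → ℝ), Monotone y ∧ ∀ v, x v = y (pos v) := by
  set e := Fintype.equivFin V
  rcases (Fintype.card V).eq_zero_or_pos with hn | hn
  · exact ⟨e, 0, monotone_const, fun v => absurd hn (Fintype.card_pos_iff.2 ⟨v⟩).ne'⟩
  set σ := Tuple.sort (x ∘ e.symm)
  refine ⟨e.trans σ.symm, fun j => x (e.symm (σ ⟨min j (Fintype.card V - 1), by omega⟩)),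
    fun j j' h => ?_, fun v => ?_⟩
  · exact Tuple.monotone_sort (x ∘ e.symm)
      (show (⟨min j _, _⟩ : Fin (Fintype.card V)) ≤ ⟨min j' _, _⟩ from min_le_min_right _ h)
  have : (⟨min (σ.symm (e v)) (Fintype.card V - 1), by omega⟩ : Fin _) = σ.symm (e v) :=
    Fin.ext (min_eq_left (by omega))
  simp only [Equiv.trans_apply, this, Equiv.apply_symm_apply, Equiv.symm_apply_apply]

theorem edgeConnectivity_mul_pathEigenvalue_mul_sum_sq_le {V : Type*} [Fintype V]
    [DecidableEq V] (G : SimpleGraph V) [DecidableRel G.Adj] {x : V → ℝ} (hx : ∑ v, x v = 0) :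
    edgeConnectivity G * pathEigenvalue (Fintype.card V) 1 * ∑ v, x v ^ 2
      ≤ (∑ u, ∑ v, if G.Adj u v then (x u - x v) ^ 2 else 0) / 2 := by
  obtain ⟨pos, y, hy, hxy⟩ := exists_eq_monotone_comp_equiv x
  have hsum_range (f : ℕ → ℝ) : ∑ v, f (pos v) = ∑ j ∈ range (Fintype.card V), f j :=
    (Equiv.sum_comp pos fun j => f j).trans (Fin.sum_univ_eq_sum_range f _)
  have hy0 : ∑ j ∈ range (Fintype.card V), y j = 0 := by rw [← hsum_range, ← hx]; simp only [hxy]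
  simp only [hxy, hsum_range fun j => y j ^ 2]
  have hcut := two_mul_edgeConnectivity_mul_pathForm_le G pos hy
  calc _ ≤ (edgeConnectivity G : ℝ) * pathForm (Fintype.card V) y y := by
        rw [mul_assoc]
        gcongr
        exact pathEigenvalue_one_mul_sum_sq_le_pathForm _ y hy0
    _ ≤ _ := by linarith

lemma algebraicConnectivity_eq_zero_of_subsingleton {n : ℕ} [Subsingleton (Fin n)]
    (G : SimpleGraph (Fin n)) : algebraicConnectivity G = 0 := by
  rw [algebraicConnectivity]
  convert Real.sInf_empty
  refine Set.eq_empty_of_forall_notMem ?_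
  rintro _ ⟨x, hx0, hsum, -⟩
  exact hx0 (funext fun i => by rwa [Fintype.sum_subsingleton _ i] at hsum)

lemma exists_ne_zero_sum_eq_zero {ι : Type*} [Fintype ι] [DecidableEq ι] [Nontrivial ι] :
    ∃ x : ι → ℝ, x ≠ 0 ∧ ∑ i, x i = 0 := by
  obtain ⟨a, b, hab⟩ := exists_pair_ne ι
  refine ⟨Pi.single a 1 - Pi.single b 1, fun h => ?_, by simp [sum_sub_distrib]⟩
  simpa [hab] using congrFun h a

theorem algConn_ge_edgeConnectivity_bound_general
    {n : ℕ} (G : SimpleGraph (Fin n)) :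
    algebraicConnectivity G ≥
      2 * (edgeConnectivity G : ℝ) * (1 - Real.cos (Real.pi / n)) := by
  classical
  rcases lt_or_ge n 2 with hn | hn
  · have : Subsingleton (Fin n) := Fin.subsingleton_iff_le_one.2 (by omega)
    rw [algebraicConnectivity_eq_zero_of_subsingleton, edgeConnectivity_eq_zero_of_subsingleton]
    simp
  have : Nontrivial (Fin n) := Fin.nontrivial_iff_two_le.2 hn
  obtain ⟨x₀, hx₀, hsum₀⟩ := exists_ne_zero_sum_eq_zero (ι := Fin n)
  refine le_csInf ⟨_, x₀, hx₀, hsum₀, rfl⟩ ?_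
  rintro _ ⟨x, hx0, hsum, rfl⟩
  have hxpos : 0 < x ⬝ᵥ x :=
    (sum_nonneg fun i _ => mul_self_nonneg (x i)).lt_of_ne' (dotProduct_self_eq_zero.not.2 hx0)
  rw [le_div_iff₀ hxpos, ← toLinearMap₂'_apply', SimpleGraph.lapMatrix_toLinearMap₂']
  refine le_of_eq_of_le ?_ (edgeConnectivity_mul_pathEigenvalue_mul_sum_sq_le G hsum)
  simp only [pathEigenvalue, Fintype.card_fin, Nat.cast_one, one_mul, dotProduct, sq]
  ring

theorem algConn_ge_edgeConnectivity_bound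
    {n : ℕ} (G : SimpleGraph (Fin n)) (hG : G.Connected) :
    algebraicConnectivity G ≥
      2 * (edgeConnectivity G : ℝ) * (1 - Real.cos (Real.pi / n)) :=
  algConn_ge_edgeConnectivity_bound_general G
end
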